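/- Let A, B be positive definite n×n complex matrices. Then trace(A^{1/2} B^{1/2}) ≤ trace((A^{1/2} B A^{1/2})^{1/2}), with equality if and only if A^{1/2} B^{1/2} is positive semidefinite (equivalently AB = BA). -/

import Mathlib

open Matrix
open scoped ComplexOrder

open Classical in
/-- The positive square root of a positive semidefinite matrix (junk value `0` otherwise). -/
noncomputable def msqrt {n : Type*} [Fintype n] [DecidableEq n] (A : Matrix n n ℂ) :
    Matrix n n ℂ :=
  if h : A.PosSemidef then
    (h.1.eigenvectorUnitary : Matrix n n ℂ) * diagonal ((↑) ∘ (√·) ∘ h.1.eigenvalues) *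
      (star h.1.eigenvectorUnitary : Matrix n n ℂ) else 0

/-- The geometric mean `P # Q = P^{1/2} (P^{-1/2} Q P^{-1/2})^{1/2} P^{1/2}`. -/
noncomputable def geoMean {n : Type*} [Fintype n] [DecidableEq n] (P Q : Matrix n n ℂ) :
    Matrix n n ℂ :=
  msqrt P * msqrt ((msqrt P)⁻¹ * Q * (msqrt P)⁻¹) * msqrt P

/-!
Put `P = A^{1/2}`, `Q = B^{1/2}`, `T = P Q` and `S = (P B P)^{1/2}`, so that `S² = T Tᴴ` and
`tr Tᴴ = tr (Q P) = tr T`. Expanding and using `tr (Tᴴ S⁻¹ T) = tr (S⁻¹ T Tᴴ) = tr S` gives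
`0 ≤ tr ((T - S)ᴴ S⁻¹ (T - S)) = 2 tr S - tr T - tr Tᴴ`. As `S⁻¹` is positive definite, equality
forces `T = S`; conversely a positive semidefinite `T` is the square root of `T Tᴴ = S²`.
-/

open scoped MatrixOrder

namespace Matrix

variable {n 𝕜 : Type*} [Fintype n] [RCLike 𝕜]

lemma PosDef.eq_zero_of_conjTranspose_mul_mul_eq_zero {m : Type*} [Fintype m]
    {M : Matrix n n 𝕜} (hM : M.PosDef) {X : Matrix n m 𝕜} (h : Xᴴ * M * X = 0) : X = 0 := by
  refine ext_iff_mulVec.mpr fun v => ?_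
  by_contra hv
  rw [zero_mulVec] at hv
  have hpos := hM.dotProduct_mulVec_pos hv
  simp only [star_mulVec, dotProduct_mulVec, vecMul_vecMul] at hpos
  rw [h, vecMul_zero, zero_dotProduct] at hpos
  exact lt_irrefl 0 hpos

variable [DecidableEq n]

lemma trace_conjTranspose_sub_mul_inv_mul_sub {S T : Matrix n n 𝕜} (hS : S.PosDef)
    (hST : S * S = T * Tᴴ) :
    ((T - S)ᴴ * S⁻¹ * (T - S)).trace = 2 * S.trace - (T.trace + Tᴴ.trace) := by
  have hSinv : S⁻¹ * S = 1 := nonsing_inv_mul S hS.det_pos.ne'.isUnit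
  have hSinv' : S * S⁻¹ = 1 := mul_nonsing_inv S hS.det_pos.ne'.isUnit
  have hquad : (Tᴴ * S⁻¹ * T).trace = S.trace := by
    rw [trace_mul_cycle, ← hST, Matrix.mul_assoc, hSinv', Matrix.mul_one]
  have hexp : (T - S)ᴴ * S⁻¹ * (T - S) =
      Tᴴ * S⁻¹ * T - Tᴴ * (S⁻¹ * S) - (S * S⁻¹) * T + S * S⁻¹ * S := by
    rw [conjTranspose_sub, hS.isHermitian.eq]
    noncomm_ring
  rw [hexp, hSinv, hSinv', Matrix.one_mul, Matrix.mul_one, Matrix.one_mul]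
  simp only [trace_add, trace_sub, hquad]
  ring

lemma trace_add_trace_conjTranspose_le {S T : Matrix n n 𝕜} (hS : S.PosDef)
    (hST : S * S = T * Tᴴ) : T.trace + Tᴴ.trace ≤ 2 * S.trace := by
  have hnonneg := (hS.inv.posSemidef.conjTranspose_mul_mul_same (T - S)).trace_nonneg
  rw [trace_conjTranspose_sub_mul_inv_mul_sub hS hST] at hnonneg
  exact sub_nonneg.mp hnonneg

lemma trace_add_trace_conjTranspose_eq_iff {S T : Matrix n n 𝕜} (hS : S.PosDef)
    (hST : S * S = T * Tᴴ) : T.trace + Tᴴ.trace = 2 * S.trace ↔ T.PosSemidef := by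
  constructor
  · intro h
    have hzero := (hS.inv.posSemidef.conjTranspose_mul_mul_same (T - S)).trace_eq_zero_iff.mp
      (by rw [trace_conjTranspose_sub_mul_inv_mul_sub hS hST, h, sub_self])
    rw [sub_eq_zero.mp (hS.inv.eq_zero_of_conjTranspose_mul_mul_eq_zero hzero)]
    exact hS.posSemidef
  · intro hT
    have hTS : T = S := by
      rw [← CFC.mul_self_eq_mul_self_iff T S hT.nonneg hS.posSemidef.nonneg, hST,
        hT.isHermitian.eq]
    rw [hTS, hS.isHermitian.eq, two_mul]

end Matrix

lemma msqrt_eq_cfcSqrt {n : Type*} [Fintype n] [DecidableEq n] {A : Matrix n n ℂ}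
    (hA : A.PosSemidef) : msqrt A = CFC.sqrt A := by
  rw [CFC.sqrt_eq_cfc, cfc_nnreal_eq_real _ A hA.nonneg, hA.1.cfc_eq, msqrt, dif_pos hA]
  simp only [IsHermitian.cfc, Unitary.conjStarAlgAut_apply, Real.sqrt]
  rfl

open scoped ComplexOrder in
theorem stmt16 {n : Type*} [Fintype n] [DecidableEq n] (A B : Matrix n n ℂ)
    (hA : A.PosDef) (hB : B.PosDef) :
    (msqrt A * msqrt B).trace ≤ (msqrt (msqrt A * B * msqrt A)).trace ∧
      ((msqrt A * msqrt B).trace = (msqrt (msqrt A * B * msqrt A)).trace ↔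
        (msqrt A * msqrt B).PosSemidef) := by
  have hP : (CFC.sqrt A).PosDef := hA.isStrictlyPositive.sqrt.posDef
  set P := CFC.sqrt A
  set Q := CFC.sqrt B
  have hPH : Pᴴ = P := hP.isHermitian.eq
  have hQH : Qᴴ = Q := (CFC.sqrt_nonneg B).posSemidef.isHermitian.eq
  have hQQ : Q * Q = B := CFC.sqrt_mul_sqrt_self B hB.posSemidef.nonneg
  have hPBP : (P * B * P).PosDef := by
    simpa only [hPH] using
      hB.conjTranspose_mul_mul_same (mulVec_injective_iff_isUnit.mpr hP.isUnit)
  have hS : (CFC.sqrt (P * B * P)).PosDef := hPBP.isStrictlyPositive.sqrt.posDef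
  have hST : CFC.sqrt (P * B * P) * CFC.sqrt (P * B * P) = (P * Q) * (P * Q)ᴴ := by
    rw [CFC.sqrt_mul_sqrt_self _ hPBP.posSemidef.nonneg, conjTranspose_mul, hPH, hQH, ← hQQ]
    noncomm_ring
  have htr : (P * Q)ᴴ.trace = (P * Q).trace := by
    rw [conjTranspose_mul, hPH, hQH, trace_mul_comm]
  have hle := trace_add_trace_conjTranspose_le hS hST
  have heq := trace_add_trace_conjTranspose_eq_iff hS hST
  rw [htr, ← two_mul] at hle heq
  rw [msqrt_eq_cfcSqrt hA.posSemidef, msqrt_eq_cfcSqrt hB.posSemidef,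
    msqrt_eq_cfcSqrt hPBP.posSemidef]
  exact ⟨le_of_mul_le_mul_left hle two_pos, by rw [← heq, mul_right_inj' two_ne_zero]⟩
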